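/- Let m ≥ 1 and let φ_0,…,φ_{m-1} and ψ_1,…,ψ_m be nonnegative reals. Define Θ_m = ∑_{k=1}^m ∑_{i=0}^{k-1} (1/(i+2)) φ_i^{1/2} ψ_{k-i}^{1/2} ψ_k^{1/2}, Φ_m = ∑_{k=0}^{m-1} φ_k (extended by φ_m ≥ 0 if desired), and Ψ_m = ∑_{k=1}^m ψ_k. Then Θ_m ≤ Φ_m^{1/2} Ψ_m, where Φ_m = ∑_{i=0}^{m} φ_i with φ_m ≥ 0 arbitrary nonnegative. -/

import Mathlib

/-!
Cauchy–Schwarz in `i` bounds the inner sum of `Θ_m` by `√Φ_m · √(S_k ψ_k)`, where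
`S_k = ∑_{i<k} ψ_{k-i} / (i+2)²`; Cauchy–Schwarz in `k` then gives `Θ_m ≤ √Φ_m · √Ψ_m · √(∑_k S_k)`.
Exchanging the order of summation, `∑_k S_k ≤ (∑_i 1/(i+2)²) · Ψ_m ≤ Ψ_m`.
-/

open Finset

lemma sum_range_one_div_add_two_sq_le_one (n : ℕ) :
    ∑ i ∈ range n, (1 / ((i : ℝ) + 2)) ^ 2 ≤ 1 := by
  have h : Ioo 1 (n + 2) = Ico (0 + 2) (n + 2) := (Ico_add_one_left_eq_Ioo 1 (n + 2)).symm
  have := sum_Ioo_inv_sq_le (α := ℝ) 1 (n + 2)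
  rw [h, ← sum_Ico_add', ← range_eq_Ico] at this
  norm_num at this
  simpa only [one_div, inv_pow] using this

lemma sum_Ioc_apply_sub_le_sum_Icc {ψ : ℕ → ℝ} (hψ : ∀ k, 0 ≤ ψ k) {i m : ℕ} :
    ∑ k ∈ Ioc i m, ψ (k - i) ≤ ∑ k ∈ Icc 1 m, ψ k := by
  rw [← sum_image (g := (· - i)) (fun a ha b hb (hab : a - i = b - i) => by
    simp only [coe_Ioc, Set.mem_Ioc] at ha hb; omega)]
  refine sum_le_sum_of_subset_of_nonneg ?_ fun k _ _ => hψ k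
  intro j hj
  simp only [mem_image, mem_Ioc, mem_Icc] at hj ⊢
  omega

/-- Young's inequality `‖c * ψ‖₁ ≤ ‖c‖₁ ‖ψ‖₁` for a truncated discrete convolution. -/
lemma sum_Icc_sum_range_mul_sub_le {c ψ : ℕ → ℝ} (hc : ∀ i, 0 ≤ c i) (hψ : ∀ k, 0 ≤ ψ k)
    (m : ℕ) :
    ∑ k ∈ Icc 1 m, ∑ i ∈ range k, c i * ψ (k - i)
      ≤ (∑ i ∈ range m, c i) * ∑ k ∈ Icc 1 m, ψ k := by
  rw [sum_comm' (t' := range m) (s' := fun i => Ioc i m)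
    (fun k i => by simp only [mem_Icc, mem_range, mem_Ioc]; omega), sum_mul]
  gcongr with i
  rw [← mul_sum]
  exact mul_le_mul_of_nonneg_left (sum_Ioc_apply_sub_le_sum_Icc hψ) (hc i)

lemma sum_Icc_sum_range_one_div_add_two_sq_mul_le {ψ : ℕ → ℝ} (hψ : ∀ k, 0 ≤ ψ k) (m : ℕ) :
    ∑ k ∈ Icc 1 m, ∑ i ∈ range k, (1 / ((i : ℝ) + 2)) ^ 2 * ψ (k - i) ≤ ∑ k ∈ Icc 1 m, ψ k :=
  calc _ ≤ (∑ i ∈ range m, (1 / ((i : ℝ) + 2)) ^ 2) * ∑ k ∈ Icc 1 m, ψ k :=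
        sum_Icc_sum_range_mul_sub_le (fun _ => sq_nonneg _) hψ m
    _ ≤ ∑ k ∈ Icc 1 m, ψ k :=
        mul_le_of_le_one_left (sum_nonneg fun k _ => hψ k) (sum_range_one_div_add_two_sq_le_one m)

lemma sum_mul_sqrt_mul_sqrt_le {ι : Type*} {s t : Finset ι} (hst : s ⊆ t) {a f g : ι → ℝ}
    (ha : ∀ i, 0 ≤ a i) (hf : ∀ i, 0 ≤ f i) (hg : ∀ i, 0 ≤ g i) :
    ∑ i ∈ s, a i * √(f i) * √(g i) ≤ √(∑ i ∈ t, f i) * √(∑ i ∈ s, a i ^ 2 * g i) := by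
  have h i : a i * √(f i) * √(g i) = √(f i) * √(a i ^ 2 * g i) := by
    rw [Real.sqrt_mul (sq_nonneg _), Real.sqrt_sq (ha i)]
    ring
  simp only [h]
  refine (Real.sum_sqrt_mul_sqrt_le s hf fun i => mul_nonneg (sq_nonneg _) (hg i)).trans ?_
  gcongr
  exact fun i _ _ => hf i

theorem theta_le_sqrt_phi_mul_psi_general (m : ℕ)
    (φ ψ : ℕ → ℝ) (hφ : ∀ i, 0 ≤ φ i) (hψ : ∀ k, 0 ≤ ψ k) :
    ∑ k ∈ Icc 1 m, ∑ i ∈ range k,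
        (1 / ((i : ℝ) + 2)) * Real.sqrt (φ i) * Real.sqrt (ψ (k - i)) * Real.sqrt (ψ k)
      ≤ Real.sqrt (∑ i ∈ range (m + 1), φ i) * ∑ k ∈ Icc 1 m, ψ k := by
  set Φ := ∑ i ∈ range (m + 1), φ i
  set Ψ := ∑ k ∈ Icc 1 m, ψ k
  set S : ℕ → ℝ := fun k => ∑ i ∈ range k, (1 / ((i : ℝ) + 2)) ^ 2 * ψ (k - i)
  have hS k : 0 ≤ S k := sum_nonneg fun i _ => mul_nonneg (sq_nonneg _) (hψ _)
  have inner : ∀ k ∈ Icc 1 m, ∑ i ∈ range k,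
      (1 / ((i : ℝ) + 2)) * √(φ i) * √(ψ (k - i)) * √(ψ k) ≤ √Φ * (√(ψ k) * √(S k)) := by
    intro k hk
    rw [← sum_mul, mul_comm √(ψ k), ← mul_assoc]
    gcongr
    exact sum_mul_sqrt_mul_sqrt_le (range_subset_range.2 (by simp at hk; omega))
      (fun i => by positivity) hφ fun i => hψ _
  calc _ ≤ ∑ k ∈ Icc 1 m, √Φ * (√(ψ k) * √(S k)) := sum_le_sum inner
    _ = √Φ * ∑ k ∈ Icc 1 m, √(ψ k) * √(S k) := (mul_sum ..).symm
    _ ≤ √Φ * (√Ψ * √(∑ k ∈ Icc 1 m, S k)) := by gcongr; exact Real.sum_sqrt_mul_sqrt_le _ hψ hS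
    _ ≤ √Φ * (√Ψ * √Ψ) := by gcongr; exact sum_Icc_sum_range_one_div_add_two_sq_mul_le hψ m
    _ = √Φ * Ψ := by rw [Real.mul_self_sqrt (sum_nonneg fun k _ => hψ k)]

/-- Bando's double-sum Cauchy–Schwarz estimate: `Θ_m ≤ Φ_m^{1/2} Ψ_m`. -/
theorem theta_le_sqrt_phi_mul_psi (m : ℕ) (hm : 1 ≤ m)
    (φ ψ : ℕ → ℝ) (hφ : ∀ i, 0 ≤ φ i) (hψ : ∀ k, 0 ≤ ψ k) :
    ∑ k ∈ Icc 1 m, ∑ i ∈ range k,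
        (1 / ((i : ℝ) + 2)) * Real.sqrt (φ i) * Real.sqrt (ψ (k - i)) * Real.sqrt (ψ k)
      ≤ Real.sqrt (∑ i ∈ range (m + 1), φ i) * ∑ k ∈ Icc 1 m, ψ k :=
  theta_le_sqrt_phi_mul_psi_general m φ ψ hφ hψ
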